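/- arXiv:2511.10543 — 3 statements merged into one kernel-verified Lean document; each statement's English description precedes it below -/
import Mathlib

section
/- Orthogonality of Dirichlet characters: for a fixed modulus N and units a, b in ℤ/Nℤ, (1/φ(N)) · ∑_{χ mod N} χ(a) · conj(χ(b)) equals 1 if a = b and 0 otherwise, where the sum is over all Dirichlet characters modulo N. -/
open ComplexConjugate

-- The values of `χ` on units are roots of unity, so conjugation inverts them.
lemma MulChar.conj_apply_units {R : Type*} [CommRing R] [Finite Rˣ] (χ : MulChar R ℂ)
    (u : Rˣ) : conj (χ u) = χ ↑u⁻¹ := by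
  rw [← RCLike.star_def, star_apply', inv_apply, Ring.inverse_unit]

lemma DirichletCharacter.sum_apply_mul_conj_apply {n : ℕ} [NeZero n] (a b : (ZMod n)ˣ) :
    ∑ χ : DirichletCharacter ℂ n, χ a * conj (χ b) =
      if a = b then (n.totient : ℂ) else 0 := by
  simp only [MulChar.conj_apply_units, ← map_mul, ← Units.val_mul, sum_characters_eq,
    Units.val_eq_one, mul_inv_eq_one]

theorem stmt_8 (N : ℕ) [NeZero N] (a b : (ZMod N)ˣ) :
    letI : Fintype (DirichletCharacter ℂ N) := Fintype.ofFinite _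
    (1 / (Nat.totient N : ℂ)) *
        ∑ χ : DirichletCharacter ℂ N, χ a * starRingEnd ℂ (χ b) =
      if a = b then 1 else 0 := by
  have htotient : (N.totient : ℂ) ≠ 0 :=
    Nat.cast_ne_zero.mpr (Nat.totient_pos.mpr N.pos_of_neZero).ne'
  rw [DirichletCharacter.sum_apply_mul_conj_apply]
  split_ifs
  · exact one_div_mul_cancel htotient
  · exact mul_zero _
end

section
/- Euler product for Dirichlet L-functions: for a Dirichlet character χ modulo N and real s > 1, the series L(s,χ) = ∑_{n=1}^∞ χ(n) n^{−s} converges absolutely and equals the product over all primes p of (1 − χ(p) p^{−s})^{−1}. -/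
theorem stmt_9_general (N : ℕ) (χ : DirichletCharacter ℂ N) (s : ℝ) (hs : 1 < s) :
    Summable (fun n : ℕ => ‖χ n * (n : ℂ) ^ (-(s : ℂ))‖) ∧
    Multipliable (fun p : Nat.Primes => (1 - χ p * (p : ℂ) ^ (-(s : ℂ)))⁻¹) ∧
    (∑' n : ℕ, χ n * (n : ℂ) ^ (-(s : ℂ))) =
      ∏' p : Nat.Primes, (1 - χ p * (p : ℂ) ^ (-(s : ℂ)))⁻¹ := by
  have hs' : 1 < (s : ℂ).re := by simpa using hs
  have hsum := summable_dirichletSummand χ hs'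
  have hprod := EulerProduct.eulerProduct_completely_multiplicative_hasProd hsum
  exact ⟨hsum, hprod.multipliable, hprod.tprod_eq.symm⟩

theorem stmt_9 (N : ℕ) [NeZero N] (χ : DirichletCharacter ℂ N) (s : ℝ) (hs : 1 < s) :
    Summable (fun n : ℕ => ‖χ n * (n : ℂ) ^ (-(s : ℂ))‖) ∧
    Multipliable (fun p : Nat.Primes => (1 - χ p * (p : ℂ) ^ (-(s : ℂ)))⁻¹) ∧
    (∑' n : ℕ, χ n * (n : ℂ) ^ (-(s : ℂ))) =
      ∏' p : Nat.Primes, (1 - χ p * (p : ℂ) ^ (-(s : ℂ)))⁻¹ :=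
  stmt_9_general N χ s hs
end

section
/- Every prime p ≡ 1 (mod 4) can be written as a sum of two squares, and this representation is unique up to order: if p = a² + b² = c² + d² with 0 < a ≤ b and 0 < c ≤ d, then a = c and b = d. -/
/-!
Existence is Fermat's theorem, `Nat.Prime.sq_add_sq`. For uniqueness, if
`p = a² + b² = c² + d²` then `(ac + bd)(ad + bc) = p(ab + cd)`, so the prime `p` divides one of
the two factors. Each factor is positive and, by the Brahmagupta–Fibonacci identity
`p² = (ac + bd)² + (ad - bc)² = (ad + bc)² + (ac - bd)²`, at most `p`; hence it equals `p`, the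
complementary square vanishes, and `ad = bc` (resp. `ac = bd`) forces the two representations to
coincide (resp. to coincide after swapping `c` and `d`).
-/

namespace Nat

theorem eq_and_eq_of_sq_add_sq_eq_of_mul_eq_mul {a b c d : ℕ}
    (h : a ^ 2 + b ^ 2 = c ^ 2 + d ^ 2) (hm : a * d = b * c) : a = c ∧ b = d := by
  have hscaled : (a ^ 2 + b ^ 2) * d ^ 2 = (a ^ 2 + b ^ 2) * b ^ 2 :=
    calc (a ^ 2 + b ^ 2) * d ^ 2 = (a * d) ^ 2 + b ^ 2 * d ^ 2 := by ring
      _ = b ^ 2 * (c ^ 2 + d ^ 2) := by rw [hm]; ring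
      _ = (a ^ 2 + b ^ 2) * b ^ 2 := by rw [← h, mul_comm]
  rcases Nat.eq_zero_or_pos (a ^ 2 + b ^ 2) with hzero | hpos
  · have hcd := h ▸ hzero
    simp only [Nat.add_eq_zero_iff, pow_eq_zero_iff two_ne_zero] at hzero hcd
    omega
  · have hdb : d = b :=
      Nat.pow_left_injective two_ne_zero (Nat.eq_of_mul_eq_mul_left hpos hscaled)
    subst hdb
    exact ⟨Nat.pow_left_injective two_ne_zero (Nat.add_right_cancel h), rfl⟩

theorem mul_eq_mul_of_dvd_mul_add_mul {p a b c d : ℕ} (hab : p = a ^ 2 + b ^ 2)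
    (hcd : p = c ^ 2 + d ^ 2) (hpos : 0 < a * c + b * d) (hdvd : p ∣ a * c + b * d) :
    a * d = b * c := by
  have hlagrange : ((a : ℤ) * d - b * c) ^ 2 + ((a : ℤ) * c + b * d) ^ 2 = (p : ℤ) ^ 2 := by
    rw [sq (p : ℤ)]; nth_rw 1 [hab]; rw [hcd]; push_cast; ring
  have hle : a * c + b * d ≤ p := by
    have : (a * c + b * d) ^ 2 ≤ p ^ 2 := by
      zify; nlinarith [sq_nonneg ((a : ℤ) * d - b * c)]
    exact (Nat.pow_le_pow_iff_left two_ne_zero).mp this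
  have heq : a * c + b * d = p := le_antisymm hle (Nat.le_of_dvd hpos hdvd)
  rw [← heq] at hlagrange
  push_cast at hlagrange
  rw [add_eq_right, sq_eq_zero_iff, sub_eq_zero] at hlagrange
  exact_mod_cast hlagrange

theorem Prime.eq_and_eq_or_eq_and_eq_of_sq_add_sq {p a b c d : ℕ} (hp : p.Prime) (ha : 0 < a)
    (hb : 0 < b) (hc : 0 < c) (hab : p = a ^ 2 + b ^ 2) (hcd : p = c ^ 2 + d ^ 2) :
    (a = c ∧ b = d) ∨ (a = d ∧ b = c) := by
  have hprod : (a * c + b * d) * (a * d + b * c) = p * (a * b + c * d) :=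
    calc (a * c + b * d) * (a * d + b * c)
        = (c ^ 2 + d ^ 2) * (a * b) + (a ^ 2 + b ^ 2) * (c * d) := by ring
      _ = p * (a * b + c * d) := by rw [← hab, ← hcd]; ring
  rcases hp.dvd_mul.mp (Dvd.intro _ hprod.symm) with hdvd | hdvd
  · exact .inl (eq_and_eq_of_sq_add_sq_eq_of_mul_eq_mul (hab ▸ hcd)
      (mul_eq_mul_of_dvd_mul_add_mul hab hcd (by positivity) hdvd))
  · have hdc : p = d ^ 2 + c ^ 2 := hcd.trans (add_comm _ _)
    exact .inr (eq_and_eq_of_sq_add_sq_eq_of_mul_eq_mul (hab ▸ hdc)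
      (mul_eq_mul_of_dvd_mul_add_mul hab hdc (by positivity) hdvd))

end Nat

theorem stmt_16 (p : ℕ) (hp : p.Prime) (h1 : p % 4 = 1) :
    (∃ a b : ℕ, p = a ^ 2 + b ^ 2) ∧
      ∀ a b c d : ℕ, 0 < a → a ≤ b → 0 < c → c ≤ d →
        p = a ^ 2 + b ^ 2 → p = c ^ 2 + d ^ 2 → a = c ∧ b = d := by
  have := Fact.mk hp
  refine ⟨?_, fun a b c d ha hab hc hcd hpab hpcd => ?_⟩
  · obtain ⟨a, b, hsum⟩ := Nat.Prime.sq_add_sq (p := p) (by omega)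
    exact ⟨a, b, hsum.symm⟩
  · rcases hp.eq_and_eq_or_eq_and_eq_of_sq_add_sq ha (ha.trans_le hab) hc hpab hpcd with h | h
    · exact h
    · omega
end
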